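/- For the type-C Dunkl operators, the product formula (∏_{j=1}^r D_j)(∏_{j=1}^r x_j) = ∏_{j=1}^r ( D_j x_j - (a/2)∑_{i<j}(σ_{ij} + s_{ij}) ) holds as operators on polynomials. -/

import Mathlib

open MvPolynomial Finset

noncomputable section

abbrev Pol (r : ℕ) : Type := MvPolynomial (Fin r) ℂ

/-- Multiplication operator by a polynomial. -/
def mulOp {r : ℕ} (p : Pol r) : Module.End ℂ (Pol r) := LinearMap.mulLeft ℂ p

/-- Partial derivative operator. -/
def pd {r : ℕ} (j : Fin r) : Module.End ℂ (Pol r) := (pderiv j).toLinearMap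

/-- The transposition operator `s_{ij}` swapping the variables `i` and `j`. -/
def swOp {r : ℕ} (i j : Fin r) : Module.End ℂ (Pol r) :=
  (rename ⇑(Equiv.swap i j) : Pol r →ₐ[ℂ] Pol r).toLinearMap

/-- The sign change operator `σ_j : x_j ↦ -x_j`. -/
def negOp {r : ℕ} (j : Fin r) : Module.End ℂ (Pol r) :=
  (aeval (fun k : Fin r => if k = j then -(X j) else X k) : Pol r →ₐ[ℂ] Pol r).toLinearMap

/-- The signed transposition operator `σ_{ij} : x_i ↦ -x_j, x_j ↦ -x_i`. -/
def sswOp {r : ℕ} (i j : Fin r) : Module.End ℂ (Pol r) :=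
  (aeval (fun k : Fin r => if k = i then -(X j) else if k = j then -(X i) else X k)
    : Pol r →ₐ[ℂ] Pol r).toLinearMap

/-- Ordered product `f 0 * f 1 * ⋯ * f (r-1)` of operators. -/
def opProd {r : ℕ} (f : Fin r → Module.End ℂ (Pol r)) : Module.End ℂ (Pol r) :=
  ((List.finRange r).map f).prod

/-- The type-C Dunkl operator
`D_j = ∂_j + ((ι-1)/2) x_j⁻¹(1-σ_j) + (a/2) ∑_{i≠j} [(x_j-x_i)⁻¹(1-s_{ij}) + (x_j+x_i)⁻¹(1-σ_{ij})]`,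
with the difference-quotient operators given as data `q0, qs, qσ` pinned down by the
specifications below. -/
def dunklC {r : ℕ} (ι a : ℂ) (q0 : Fin r → Module.End ℂ (Pol r))
    (qs qσ : Fin r → Fin r → Module.End ℂ (Pol r)) (j : Fin r) : Module.End ℂ (Pol r) :=
  pd j + ((ι - 1) / 2) • q0 j + (a / 2) • ∑ i ∈ Finset.univ.erase j, (qs i j + qσ i j)

/-- Specification: `q0 j` is division of `(1 - σ_j) f` by `x_j`. -/
def QuotLong {r : ℕ} (q0 : Fin r → Module.End ℂ (Pol r)) : Prop :=
  ∀ j : Fin r, ∀ f : Pol r, X j * q0 j f = f - negOp j f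

/-- Specification: `qs i j` is division of `(1 - s_{ij}) f` by `x_j - x_i`. -/
def QuotS {r : ℕ} (qs : Fin r → Fin r → Module.End ℂ (Pol r)) : Prop :=
  ∀ i j : Fin r, i ≠ j → ∀ f : Pol r, (X j - X i) * qs i j f = f - swOp i j f

/-- Specification: `qσ i j` is division of `(1 - σ_{ij}) f` by `x_j + x_i`. -/
def QuotSig {r : ℕ} (qσ : Fin r → Fin r → Module.End ℂ (Pol r)) : Prop :=
  ∀ i j : Fin r, i ≠ j → ∀ f : Pol r, (X j + X i) * qσ i j f = f - sswOp i j f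

/-! A difference quotient `q` with `d * q f = f - φ f` obeys the twisted Leibniz rule
`q (g f) = g q(f) + h φ(f)` whenever `g - φ g = d h`. Applied to `g = x_0 ⋯ x_{n-1}` this gives
`D_n (x_0 ⋯ x_{n-1} · x_n f) = x_0 ⋯ x_{n-1} · (D_n (x_n f) - (a/2) ∑_{i<n} (σ_{in} + s_{in}) f)`:
each `x_i` with `i < n` passes through `D_n` except for a single reflection term, coming from
`qs i n` and `qσ i n`. The monomials `x_0 ⋯ x_{n-1}` then telescope through the ordered product. -/

section TwistedLeibniz

variable {R : Type*} [CommRing R] [IsDomain R] {q φ : R → R} {d g : R}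

theorem quot_mul_of_sub_eq_mul (hd : d ≠ 0) (hq : ∀ f, d * q f = f - φ f)
    (hφ : ∀ f, φ (g * f) = φ g * φ f) {h : R} (hg : g - φ g = d * h) (f : R) :
    q (g * f) = g * q f + h * φ f := by
  apply mul_left_cancel₀ hd
  rw [hq, hφ, mul_add, mul_left_comm, hq, ← mul_assoc, ← hg]
  ring

theorem quot_mul_of_map_eq_self (hd : d ≠ 0) (hq : ∀ f, d * q f = f - φ f)
    (hφ : ∀ f, φ (g * f) = φ g * φ f) (hg : φ g = g) (f : R) : q (g * f) = g * q f := by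
  simpa using quot_mul_of_sub_eq_mul hd hq hφ (h := 0) (by simp [hg]) f

end TwistedLeibniz

theorem List.prod_map_finRange_mul_eq_mul_prod_map {M : Type*} [Monoid M] {r : ℕ} (f g : Fin r → M)
    (A : ℕ → M) (h : ∀ k : Fin r, f k * A (k + 1) = A k * g k) :
    ((List.finRange r).map f).prod * A r = A 0 * ((List.finRange r).map g).prod := by
  induction r generalizing A with
  | zero => simp
  | succ r ih =>
    have ih' := ih (fun k => f k.succ) (fun k => g k.succ) (fun k => A (k + 1))
      (fun k => by simpa using h k.succ)
    simp only [List.finRange_succ, List.map_cons, List.map_map, List.prod_cons,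
      Function.comp_def, mul_assoc, ih']
    rw [← mul_assoc, ← mul_assoc, show f 0 * A (0 + 1) = A 0 * g 0 from h 0]

variable {r : ℕ}

theorem X_sub_X_ne_zero {i n : Fin r} (h : i ≠ n) : (X n - X i : Pol r) ≠ 0 := fun e => by
  simpa [pderiv_X_of_ne h] using congrArg (pderiv n) e

theorem X_add_X_ne_zero {i n : Fin r} (h : i ≠ n) : (X n + X i : Pol r) ≠ 0 := fun e => by
  simpa [pderiv_X_of_ne h] using congrArg (pderiv n) e

theorem mulOp_mul (p p' : Pol r) : mulOp (p * p') = mulOp p * mulOp p' :=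
  LinearMap.mulLeft_mul ℂ (Pol r) p p'

theorem mulOp_one : mulOp (1 : Pol r) = 1 :=
  LinearMap.mulLeft_one ℂ (Pol r)

theorem map_prod_X_of_forall {φ : Pol r →ₐ[ℂ] Pol r} {T : Finset (Fin r)}
    (h : ∀ j ∈ T, φ (X j) = X j) : φ (∏ j ∈ T, X j) = ∏ j ∈ T, X j := by
  rw [map_prod]
  exact prod_congr rfl h

section Reflections

variable {i n : Fin r} {T : Finset (Fin r)}

theorem swOp_mul (p p' : Pol r) : swOp i n (p * p') = swOp i n p * swOp i n p' :=
  map_mul (rename _ : Pol r →ₐ[ℂ] Pol r) p p'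

theorem sswOp_mul (p p' : Pol r) : sswOp i n (p * p') = sswOp i n p * sswOp i n p' :=
  map_mul (aeval _ : Pol r →ₐ[ℂ] Pol r) p p'

theorem negOp_mul (p p' : Pol r) : negOp n (p * p') = negOp n p * negOp n p' :=
  map_mul (aeval _ : Pol r →ₐ[ℂ] Pol r) p p'

theorem swOp_X_left : swOp i n (X i) = X n := by simp [swOp]

theorem swOp_X_right : swOp i n (X n) = X i := by simp [swOp]

theorem sswOp_X_left : sswOp i n (X i) = -X n := by simp [sswOp]

theorem sswOp_X_right (hin : i ≠ n) : sswOp i n (X n) = -X i := by simp [sswOp, hin.symm]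

theorem swOp_prod_X (hi : i ∉ T) (hn : n ∉ T) : swOp i n (∏ j ∈ T, X j) = ∏ j ∈ T, X j :=
  map_prod_X_of_forall (φ := rename _) fun j hj => by
    simp [Equiv.swap_apply_of_ne_of_ne (ne_of_mem_of_not_mem hj hi) (ne_of_mem_of_not_mem hj hn)]

theorem sswOp_prod_X (hi : i ∉ T) (hn : n ∉ T) : sswOp i n (∏ j ∈ T, X j) = ∏ j ∈ T, X j :=
  map_prod_X_of_forall (φ := aeval _) fun j hj => by
    simp [ne_of_mem_of_not_mem hj hi, ne_of_mem_of_not_mem hj hn]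

theorem negOp_prod_X (hn : n ∉ T) : negOp n (∏ j ∈ T, X j) = ∏ j ∈ T, X j :=
  map_prod_X_of_forall (φ := aeval _) fun j hj => by simp [ne_of_mem_of_not_mem hj hn]

end Reflections

section Dunkl

variable {q0 : Fin r → Module.End ℂ (Pol r)} {qs qσ : Fin r → Fin r → Module.End ℂ (Pol r)}
  {i n : Fin r} {T : Finset (Fin r)}

theorem qs_prod_X_mul (hqs : QuotS qs) (hin : i ≠ n) (hnT : n ∉ T) (f : Pol r) :
    qs i n ((∏ j ∈ T, X j) * (X n * f))
      = (∏ j ∈ T, X j) * (qs i n (X n * f) - if i ∈ T then swOp i n f else 0) := by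
  by_cases hiT : i ∈ T
  · have hfix : swOp i n (∏ j ∈ T.erase i, X j) = ∏ j ∈ T.erase i, X j :=
      swOp_prod_X (notMem_erase i T) fun h => hnT (mem_of_mem_erase h)
    rw [← mul_prod_erase T X hiT, if_pos hiT, quot_mul_of_sub_eq_mul (X_sub_X_ne_zero hin)
      (hqs i n hin) (swOp_mul _) (h := -∏ j ∈ T.erase i, X j)]
    · rw [swOp_mul, swOp_X_right]
      ring
    · rw [swOp_mul, swOp_X_left, hfix]
      ring
  · rw [if_neg hiT, sub_zero]
    exact quot_mul_of_map_eq_self (X_sub_X_ne_zero hin) (hqs i n hin) (swOp_mul _)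
      (swOp_prod_X hiT hnT) _

theorem qσ_prod_X_mul (hqσ : QuotSig qσ) (hin : i ≠ n) (hnT : n ∉ T) (f : Pol r) :
    qσ i n ((∏ j ∈ T, X j) * (X n * f))
      = (∏ j ∈ T, X j) * (qσ i n (X n * f) - if i ∈ T then sswOp i n f else 0) := by
  by_cases hiT : i ∈ T
  · have hfix : sswOp i n (∏ j ∈ T.erase i, X j) = ∏ j ∈ T.erase i, X j :=
      sswOp_prod_X (notMem_erase i T) fun h => hnT (mem_of_mem_erase h)
    rw [← mul_prod_erase T X hiT, if_pos hiT, quot_mul_of_sub_eq_mul (X_add_X_ne_zero hin)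
      (hqσ i n hin) (sswOp_mul _) (h := ∏ j ∈ T.erase i, X j)]
    · rw [sswOp_mul, sswOp_X_right hin]
      ring
    · rw [sswOp_mul, sswOp_X_left, hfix]
      ring
  · rw [if_neg hiT, sub_zero]
    exact quot_mul_of_map_eq_self (X_add_X_ne_zero hin) (hqσ i n hin) (sswOp_mul _)
      (sswOp_prod_X hiT hnT) _

theorem q0_prod_X_mul (hq0 : QuotLong q0) (hnT : n ∉ T) (f : Pol r) :
    q0 n ((∏ j ∈ T, X j) * f) = (∏ j ∈ T, X j) * q0 n f :=
  quot_mul_of_map_eq_self (X_ne_zero n) (hq0 n) (negOp_mul _) (negOp_prod_X hnT) f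

theorem pderiv_prod_X_mul (hnT : n ∉ T) (f : Pol r) :
    pderiv n ((∏ j ∈ T, X j) * f) = (∏ j ∈ T, X j) * pderiv n f := by
  have hP : pderiv n (∏ j ∈ T, X j : Pol r) = 0 :=
    prod_induction _ (fun p => pderiv n p = 0) (fun p p' hp hp' => by simp [hp, hp'])
      pderiv_one fun j hj => pderiv_X_of_ne (ne_of_mem_of_not_mem hj hnT)
  simp [hP]

theorem dunklC_prod_X_mul (hq0 : QuotLong q0) (hqs : QuotS qs) (hqσ : QuotSig qσ) (ι a : ℂ)
    (hnT : n ∉ T) (f : Pol r) :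
    dunklC ι a q0 qs qσ n ((∏ j ∈ T, X j) * (X n * f))
      = (∏ j ∈ T, X j) * (dunklC ι a q0 qs qσ n (X n * f)
          - (a / 2) • ∑ i ∈ T, (sswOp i n f + swOp i n f)) := by
  have hT : T ⊆ univ.erase n := fun j hj => mem_erase.2 ⟨ne_of_mem_of_not_mem hj hnT, mem_univ j⟩
  have hsum : ∑ i ∈ univ.erase n,
        (qs i n ((∏ j ∈ T, X j) * (X n * f)) + qσ i n ((∏ j ∈ T, X j) * (X n * f)))
      = (∏ j ∈ T, X j) * (∑ i ∈ univ.erase n, (qs i n (X n * f) + qσ i n (X n * f))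
          - ∑ i ∈ T, (sswOp i n f + swOp i n f)) := calc
    _ = ∑ i ∈ univ.erase n, (∏ j ∈ T, X j) * (qs i n (X n * f) + qσ i n (X n * f)
          - if i ∈ T then sswOp i n f + swOp i n f else 0) := sum_congr rfl fun i hi => by
        rw [qs_prod_X_mul hqs (ne_of_mem_erase hi) hnT, qσ_prod_X_mul hqσ (ne_of_mem_erase hi) hnT]
        split_ifs <;> ring
    _ = _ := by rw [← mul_sum, sum_sub_distrib, sum_ite_mem, inter_eq_right.2 hT]
  simp only [dunklC, pd, LinearMap.add_apply, LinearMap.smul_apply, LinearMap.sum_apply,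
    Derivation.coeFn_coe]
  rw [pderiv_prod_X_mul hnT, q0_prod_X_mul hq0 hnT, hsum]
  simp only [smul_eq_C_mul]
  ring

theorem dunklC_mul_mulOp_prod_X_lt (hq0 : QuotLong q0) (hqs : QuotS qs) (hqσ : QuotSig qσ)
    (ι a : ℂ) (n : Fin r) :
    dunklC ι a q0 qs qσ n * (mulOp (∏ j ∈ univ.filter (· < n), X j) * mulOp (X n))
      = mulOp (∏ j ∈ univ.filter (· < n), X j) * (dunklC ι a q0 qs qσ n * mulOp (X n)
          - (a / 2) • ∑ i ∈ univ.filter (· < n), (sswOp i n + swOp i n)) := by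
  refine LinearMap.ext fun f => ?_
  simpa [mulOp] using dunklC_prod_X_mul hq0 hqs hqσ ι a (by simp) f

end Dunkl

theorem prod_X_lt_succ (n : Fin r) :
    ∏ j ∈ univ.filter (fun j : Fin r => (j : ℕ) < n + 1), (X j : Pol r)
      = (∏ j ∈ univ.filter (· < n), X j) * X n := by
  have h : univ.filter (fun j : Fin r => (j : ℕ) < n + 1) = insert n (univ.filter (· < n)) := by
    ext j
    simp only [mem_filter, mem_univ, true_and, mem_insert, Fin.lt_def, Fin.ext_iff]
    omega
  rw [h, prod_insert (by simp), mul_comm]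

/-- The product formula for type-C Dunkl operators:
`(∏ⱼ Dⱼ)(∏ⱼ xⱼ) = ∏ⱼ (Dⱼ xⱼ - (a/2)∑_{i<j}(σ_{ij} + s_{ij}))`. -/
theorem dunklC_prod_formula {r : ℕ} (ι a : ℂ) (q0 : Fin r → Module.End ℂ (Pol r))
    (qs qσ : Fin r → Fin r → Module.End ℂ (Pol r))
    (hq0 : QuotLong q0) (hqs : QuotS qs) (hqσ : QuotSig qσ) :
    opProd (dunklC ι a q0 qs qσ) * mulOp (∏ j : Fin r, X j)
      = opProd (fun j => dunklC ι a q0 qs qσ j * mulOp (X j) -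
          (a / 2) • ∑ i ∈ Finset.univ.filter (fun i => i < j), (sswOp i j + swOp i j)) := by
  have hA := List.prod_map_finRange_mul_eq_mul_prod_map (dunklC ι a q0 qs qσ) _
    (fun k => mulOp (∏ j ∈ univ.filter (fun j : Fin r => (j : ℕ) < k), X j)) fun n => by
      rw [prod_X_lt_succ, mulOp_mul]
      exact dunklC_mul_mulOp_prod_X_lt hq0 hqs hqσ ι a n
  simpa [opProd, mulOp_one] using hA
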